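/- arXiv:2304.06232 — 6 statements merged into one kernel-verified Lean document; each statement's English description precedes it below -/
import Mathlib

section
/- For CRPQs Q₁ and Q₂ (with languages not containing the empty word), Q₁ is contained in Q₂ under query-injective semantics if and only if for every expansion E₁ of Q₁ there exists an expansion E₂ of Q₂ with an injective homomorphism E₂ →^{inj} E₁. -/
/-- A graph database over a finite alphabet `A`: a finite set of nodes with
`A`-labeled directed edges. -/
structure GraphDB (A : Type) where
  V : Type
  fin : Finite V
  E : V → A → V → Prop

namespace GraphDB

variable {A : Type} (G : GraphDB A)

/-- `Chain u s` holds when `s` is a list of (label, next-vertex) steps forming a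
directed path starting at `u`. -/
def Chain : G.V → List (A × G.V) → Prop
  | _, [] => True
  | u, (a, v) :: rest => G.E u a v ∧ Chain v rest

/-- Endpoint of the path starting at `u` with steps `s`. -/
def endOf (u : G.V) (s : List (A × G.V)) : G.V := (s.map Prod.snd).getLastD u

/-- Label (word) of a path. -/
def label (s : List (A × G.V)) : List A := s.map Prod.fst

/-- The list of nodes visited by the path starting at `u` with steps `s`. -/
def nodes (u : G.V) (s : List (A × G.V)) : List G.V := u :: s.map Prod.snd

/-- Internal nodes of a path: all visited nodes except the first and the last. -/
def internal (u : G.V) (s : List (A × G.V)) : List G.V := (s.map Prod.snd).dropLast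

/-- A simple path: no repeated nodes. -/
def IsSimplePath (u : G.V) (s : List (A × G.V)) : Prop := (G.nodes u s).Nodup

/-- A simple cycle: returns to its start and repeats no other node. -/
def IsSimpleCycle (u : G.V) (s : List (A × G.V)) : Prop :=
  G.endOf u s = u ∧ (u :: (s.map Prod.snd).dropLast).Nodup

end GraphDB

/-- A conjunctive regular path query with `n` (not necessarily distinct) free
variables: finitely many variables and `m` atoms `src i →^{lang i} tgt i`,
where each `lang i` is a language over `A`. -/
structure CRPQ (A : Type) (n : ℕ) where
  X : Type
  fin : Finite X
  m : ℕ
  src : Fin m → X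
  lang : Fin m → Set (List A)
  tgt : Fin m → X
  free : Fin n → X

namespace CRPQ

variable {A : Type} {n : ℕ} (Q : CRPQ A n) (G : GraphDB A)

/-- `s` is a witnessing path for atom `i` under the assignment `μ`. -/
def Wit (μ : Q.X → G.V) (i : Fin Q.m) (s : List (A × G.V)) : Prop :=
  G.Chain (μ (Q.src i)) s ∧ G.endOf (μ (Q.src i)) s = μ (Q.tgt i) ∧
    G.label s ∈ Q.lang i

/-- A witnessing path which is moreover a simple path (a simple cycle if the
atom's endpoints are the same variable). -/
def WitSimple (μ : Q.X → G.V) (i : Fin Q.m) (s : List (A × G.V)) : Prop :=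
  Q.Wit G μ i s ∧
    (Q.src i = Q.tgt i → G.IsSimpleCycle (μ (Q.src i)) s) ∧
    (Q.src i ≠ Q.tgt i → G.IsSimplePath (μ (Q.src i)) s)

/-- Standard semantics. -/
def evalSt : Set (Fin n → G.V) :=
  { v | ∃ μ : Q.X → G.V, (∀ j, μ (Q.free j) = v j) ∧ ∀ i, ∃ s, Q.Wit G μ i s }

/-- Atom-injective semantics: each atom is witnessed by a simple path
(simple cycle for atoms with equal endpoints). -/
def evalAInj : Set (Fin n → G.V) :=
  { v | ∃ μ : Q.X → G.V, (∀ j, μ (Q.free j) = v j) ∧ ∀ i, ∃ s, Q.WitSimple G μ i s }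

/-- Query-injective semantics: additionally the variable assignment is
injective, witnessing simple paths of distinct atoms share no internal nodes,
and internal nodes of witnessing paths avoid the images of the variables. -/
def evalQInj : Set (Fin n → G.V) :=
  { v | ∃ μ : Q.X → G.V, Function.Injective μ ∧ (∀ j, μ (Q.free j) = v j) ∧
      ∃ π : (i : Fin Q.m) → List (A × G.V),
        (∀ i, Q.WitSimple G μ i (π i)) ∧
        (∀ i j, i ≠ j → ∀ x, x ∈ G.internal (μ (Q.src i)) (π i) →
          x ∉ G.internal (μ (Q.src j)) (π j)) ∧
        (∀ i, ∀ x ∈ G.internal (μ (Q.src i)) (π i), ∀ z, x ≠ μ z) }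

end CRPQ

/-- Containment under standard semantics. -/
def ContainedSt {A : Type} {n : ℕ} (Q₁ Q₂ : CRPQ A n) : Prop :=
  ∀ G : GraphDB A, Q₁.evalSt G ⊆ Q₂.evalSt G

/-- Containment under atom-injective semantics. -/
def ContainedAInj {A : Type} {n : ℕ} (Q₁ Q₂ : CRPQ A n) : Prop :=
  ∀ G : GraphDB A, Q₁.evalAInj G ⊆ Q₂.evalAInj G

/-- Containment under query-injective semantics. -/
def ContainedQInj {A : Type} {n : ℕ} (Q₁ Q₂ : CRPQ A n) : Prop :=
  ∀ G : GraphDB A, Q₁.evalQInj G ⊆ Q₂.evalQInj G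

/-- A conjunctive query with `n` free variables, viewed as an edge-labeled
graph with distinguished free variables. -/
structure CQ (A : Type) (n : ℕ) where
  X : Type
  fin : Finite X
  Ed : X → A → X → Prop
  free : Fin n → X

namespace CQ

variable {A : Type} {n : ℕ}

/-- A CQ viewed as a graph database. -/
def toDB (C : CQ A n) : GraphDB A := ⟨C.X, C.fin, C.Ed⟩

/-- A homomorphism from `C` to a graph database `G` mapping the free variables
to the tuple `v`. -/
def HomDB (C : CQ A n) (G : GraphDB A) (v : Fin n → G.V) (h : C.X → G.V) : Prop :=
  (∀ x a y, C.Ed x a y → G.E (h x) a (h y)) ∧ ∀ j, h (C.free j) = v j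

/-- An injective homomorphism from `C` to `(G, v)`. -/
def InjHomDB (C : CQ A n) (G : GraphDB A) (v : Fin n → G.V) (h : C.X → G.V) : Prop :=
  C.HomDB G v h ∧ Function.Injective h

/-- A homomorphism between CQs (free variables map to free variables). -/
def Hom (C D : CQ A n) (h : C.X → D.X) : Prop :=
  (∀ x a y, C.Ed x a y → D.Ed (h x) a (h y)) ∧ ∀ j, h (C.free j) = D.free j

/-- An injective homomorphism between CQs. -/
def InjHom (C D : CQ A n) (h : C.X → D.X) : Prop :=
  C.Hom D h ∧ Function.Injective h

end CQ

namespace CRPQ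

variable {A : Type} {n : ℕ} (Q : CRPQ A n)

/-- Raw variables of the expansion of `Q` determined by the word choice `c`:
the variables of `Q` together with fresh internal variables on each atom's path. -/
def rawVar (c : Fin Q.m → List A) : Type :=
  Q.X ⊕ Σ i : Fin Q.m, Fin ((c i).length - 1)

/-- Identifications forced by atoms expanded by the empty word. -/
def epsRel (c : Fin Q.m → List A) (u v : Q.rawVar c) : Prop :=
  ∃ i : Fin Q.m, c i = [] ∧ u = Sum.inl (Q.src i) ∧ v = Sum.inl (Q.tgt i)

/-- Variables of the expansion of `Q` determined by `c`. -/
def expVar (c : Fin Q.m → List A) : Type :=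
  Quotient (Relation.EqvGen.setoid (Q.epsRel c))

/-- The raw node at position `j` (with `0 ≤ j ≤ |c i|`) on the path expanding atom `i`. -/
def rawNodeAt (c : Fin Q.m → List A) (i : Fin Q.m) (j : ℕ)
    (hj : j ≤ (c i).length) : Q.rawVar c :=
  if _h0 : j = 0 then Sum.inl (Q.src i)
  else if _hl : j = (c i).length then Sum.inl (Q.tgt i)
  else Sum.inr ⟨i, ⟨j - 1, by omega⟩⟩

/-- The node at position `j` on the path expanding atom `i`. -/
def nodeAt (c : Fin Q.m → List A) (i : Fin Q.m) (j : ℕ)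
    (hj : j ≤ (c i).length) : Q.expVar c :=
  Quotient.mk _ (Q.rawNodeAt c i j hj)

/-- The expansion of `Q` determined by the word choice `c`: each atom
`x →^{L} y` with chosen word `w = c i ∈ L` is replaced by a path of fresh
variables spelling `w` (for `w = ε`, the endpoints are identified). -/
def expansion (c : Fin Q.m → List A) : CQ A n where
  X := Q.expVar c
  fin := by
    haveI := Q.fin
    haveI : Finite (Q.rawVar c) := by unfold rawVar; infer_instance
    exact Finite.of_surjective (Quotient.mk _) fun q => Quot.exists_rep q
  Ed := fun u a v => ∃ i : Fin Q.m, ∃ j : Fin (c i).length,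
    (c i).get j = a ∧ u = Q.nodeAt c i j (Nat.le_of_lt j.isLt) ∧
      v = Q.nodeAt c i (j + 1) j.isLt
  free := fun j => Quotient.mk _ (Sum.inl (Q.free j))

/-- `c` chooses, for every atom, a word of its language. -/
def IsChoice (c : Fin Q.m → List A) : Prop := ∀ i, c i ∈ Q.lang i

/-- Variables of the expansion lying on the path expanding atom `i`. -/
def atomNodes (c : Fin Q.m → List A) (i : Fin Q.m) : Set (Q.expVar c) :=
  { z | ∃ j : ℕ, ∃ hj : j ≤ (c i).length, z = Q.nodeAt c i j hj }

/-- Two variables of the expansion are atom-related if they lie on the path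
expanding a common atom. -/
def AtomRelated (c : Fin Q.m → List A) (x y : Q.expVar c) : Prop :=
  ∃ i, x ∈ Q.atomNodes c i ∧ y ∈ Q.atomNodes c i

/-- An atom-injective homomorphism from the expansion of `Q` determined by `c`
to `(G, v)`: a homomorphism injective on every pair of distinct atom-related
variables. -/
def AInjHomDB (c : Fin Q.m → List A) (G : GraphDB A) (v : Fin n → G.V)
    (h : Q.expVar c → G.V) : Prop :=
  (Q.expansion c).HomDB G v h ∧
    ∀ x y, Q.AtomRelated c x y → x ≠ y → h x ≠ h y

/-- `F` is an atom-injective expansion of `Q`: it is obtained from an expansion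
of `Q` by identifying some variables (surjective quotient map `ρ`), never
identifying two distinct atom-related variables. -/
def IsAInjExpansion (F : CQ A n) : Prop :=
  ∃ c, Q.IsChoice c ∧ ∃ ρ : Q.expVar c → F.X,
    Function.Surjective ρ ∧
    (∀ u a v, F.Ed u a v ↔ ∃ u' v', ρ u' = u ∧ ρ v' = v ∧ (Q.expansion c).Ed u' a v') ∧
    (∀ j, F.free j = ρ ((Q.expansion c).free j)) ∧
    (∀ x y, Q.AtomRelated c x y → x ≠ y → ρ x ≠ ρ y)

end CRPQ

namespace GraphDB

variable {A : Type} (G : GraphDB A)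

/-- The path with node sequence `η` spelling the word `w`. -/
def pathOf (η : ℕ → G.V) (w : List A) : List (A × G.V) :=
  List.ofFn fun j : Fin w.length => (w.get j, η (j + 1))

lemma pathOf_nil (η : ℕ → G.V) : G.pathOf η [] = [] := by simp [pathOf]

lemma pathOf_cons (η : ℕ → G.V) (a : A) (w : List A) :
    G.pathOf η (a :: w) = (a, η 1) :: G.pathOf (fun k => η (k + 1)) w := by
  simp [pathOf, List.ofFn_succ, Function.comp]

lemma label_pathOf (η : ℕ → G.V) (w : List A) : G.label (G.pathOf η w) = w := by
  simp [pathOf, label, List.map_ofFn, Function.comp_def, List.ofFn_get]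

lemma map_snd_pathOf (η : ℕ → G.V) (w : List A) :
    (G.pathOf η w).map Prod.snd = List.ofFn fun j : Fin w.length => η (j + 1) := by
  simp [pathOf, List.map_ofFn, Function.comp_def]

lemma nodes_pathOf (η : ℕ → G.V) (w : List A) :
    G.nodes (η 0) (G.pathOf η w) = List.ofFn fun j : Fin (w.length + 1) => η j := by
  rw [nodes, map_snd_pathOf, List.ofFn_succ]
  rfl

lemma endOf_pathOf (η : ℕ → G.V) (w : List A) :
    G.endOf (η 0) (G.pathOf η w) = η w.length := by
  induction w generalizing η with
  | nil => simp [pathOf_nil, endOf]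
  | cons a w ih =>
    rw [pathOf_cons]
    show (η 1 :: (G.pathOf (fun k => η (k+1)) w).map Prod.snd).getLastD _ = _
    rw [List.getLastD_cons]
    exact ih (fun k => η (k + 1))

lemma chain_pathOf (η : ℕ → G.V) (w : List A)
    (h : ∀ j, (hj : j < w.length) → G.E (η j) (w.get ⟨j, hj⟩) (η (j + 1))) :
    G.Chain (η 0) (G.pathOf η w) := by
  induction w generalizing η with
  | nil => simp [pathOf_nil, Chain]
  | cons a w ih =>
    rw [pathOf_cons]
    exact ⟨h 0 (by simp), ih (fun k => η (k + 1)) (fun j hj => h (j + 1) (by simpa))⟩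

lemma dropLast_ofFn {α : Type*} {m : ℕ} (f : Fin m → α) :
    (List.ofFn f).dropLast = List.ofFn fun i : Fin (m - 1) => f ⟨i, by omega⟩ := by
  apply List.ext_getElem
  · simp
  · intro i h1 h2
    simp [List.getElem_dropLast]

lemma internal_pathOf (u : G.V) (η : ℕ → G.V) (w : List A) :
    G.internal u (G.pathOf η w) = List.ofFn fun j : Fin (w.length - 1) => η (j + 1) := by
  rw [internal, map_snd_pathOf, dropLast_ofFn]

lemma length_pathOf (η : ℕ → G.V) (w : List A) : (G.pathOf η w).length = w.length := by
  simp [pathOf]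

/-- The `j`-th node of the path `s` starting at `u`. -/
def nodeIdx (u : G.V) (s : List (A × G.V)) (j : ℕ) : G.V := (G.nodes u s).getD j u

lemma nodeIdx_zero (u : G.V) (s : List (A × G.V)) : G.nodeIdx u s 0 = u := by
  simp [nodeIdx, nodes]

lemma nodeIdx_succ (u v : G.V) (a : A) (s : List (A × G.V)) (j : ℕ) (hj : j < s.length + 1) :
    G.nodeIdx u ((a, v) :: s) (j + 1) = (G.nodeIdx v s j : G.V) := by
  show ((u :: v :: s.map Prod.snd).getD (j+1) u) = (v :: s.map Prod.snd).getD j v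
  rw [List.getD_cons_succ]
  rw [List.getD_eq_getElem _ _ (by simpa using hj), List.getD_eq_getElem _ _ (by simpa using hj)]

lemma endOf_eq_nodeIdx (u : G.V) (s : List (A × G.V)) :
    G.endOf u s = G.nodeIdx u s s.length := by
  induction s generalizing u with
  | nil => simp [endOf, nodeIdx, nodes]
  | cons p s ih =>
    obtain ⟨a, v⟩ := p
    show (v :: s.map Prod.snd).getLastD u = _
    rw [List.getLastD_cons, show (List.map Prod.snd s).getLastD v = G.endOf v s from rfl, ih v]
    rw [List.length_cons, G.nodeIdx_succ u v a s s.length (by omega)]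

lemma chain_nodeIdx {u : G.V} {s : List (A × G.V)} (hch : G.Chain u s) :
    ∀ j, (hj : j < s.length) →
      G.E (G.nodeIdx u s j) (s.get ⟨j, hj⟩).fst (G.nodeIdx u s (j + 1)) := by
  induction s generalizing u with
  | nil => intro j hj; simp at hj
  | cons p s ih =>
    obtain ⟨a, v⟩ := p
    obtain ⟨he, hch'⟩ := hch
    intro j hj
    match j with
    | 0 =>
      rw [G.nodeIdx_zero, G.nodeIdx_succ u v a s 0 (by omega), G.nodeIdx_zero]
      exact he
    | j + 1 =>
      rw [G.nodeIdx_succ u v a s j (by simp at hj; omega),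
        G.nodeIdx_succ u v a s (j+1) (by simp at hj; omega)]
      exact ih hch' j (by simpa using hj)

lemma length_internal (u : G.V) (s : List (A × G.V)) :
    (G.internal u s).length = s.length - 1 := by simp [internal]

lemma internal_getElem (u : G.V) (s : List (A × G.V)) (t : ℕ) (ht : t < s.length - 1) :
    (G.internal u s)[t]'(by rw [length_internal]; exact ht) = G.nodeIdx u s (t + 1) := by
  show ((s.map Prod.snd).dropLast)[t]'(by simp; omega) = (u :: s.map Prod.snd).getD (t+1) u
  rw [List.getElem_dropLast, List.getD_eq_getElem _ _ (by simp; omega), List.getElem_cons_succ]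

lemma nodeIdx_succ_mem_internal (u : G.V) (s : List (A × G.V)) (t : ℕ) (ht : t < s.length - 1) :
    G.nodeIdx u s (t + 1) ∈ G.internal u s := by
  rw [← internal_getElem G u s t ht]
  exact List.getElem_mem _

lemma internal_nodup_of_path {u : G.V} {s : List (A × G.V)} (h : G.IsSimplePath u s) :
    (G.internal u s).Nodup := by
  rw [IsSimplePath, nodes] at h
  exact ((List.dropLast_sublist _).nodup (h.of_cons) : _)

lemma internal_nodup_of_cycle {u : G.V} {s : List (A × G.V)} (h : G.IsSimpleCycle u s) :
    (G.internal u s).Nodup := h.2.of_cons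

end GraphDB

namespace CRPQ

variable {A : Type} {n : ℕ} (Q : CRPQ A n)

/-- The quotient map onto the expansion variables. -/
def mkVar (c : Fin Q.m → List A) (x : Q.rawVar c) : Q.expVar c :=
  Quotient.mk (Relation.EqvGen.setoid (Q.epsRel c)) x

lemma eqvGen_epsRel_eq {c : Fin Q.m → List A} (hc : ∀ i, c i ≠ []) :
    ∀ x y, Relation.EqvGen (Q.epsRel c) x y → x = y := by
  intro x y h'
  induction h' with
  | rel a b hab => obtain ⟨i, hi, _, _⟩ := hab; exact absurd hi (hc i)
  | refl => rfl
  | symm a b _ ih => exact ih.symm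
  | trans a b d _ _ ih1 ih2 => exact ih1.trans ih2

lemma mkVar_injective {c : Fin Q.m → List A} (hc : ∀ i, c i ≠ []) :
    Function.Injective (Q.mkVar c) :=
  fun x y h => Q.eqvGen_epsRel_eq hc x y (Quotient.exact h)

lemma nodeAt_congr (c : Fin Q.m → List A) (i : Fin Q.m) {j j' : ℕ} (h : j = j')
    (hj : j ≤ (c i).length) (hj' : j' ≤ (c i).length) :
    Q.nodeAt c i j hj = Q.nodeAt c i j' hj' := by subst h; rfl

lemma nodeAt_eq_mkVar (c : Fin Q.m → List A) (i : Fin Q.m) (j : ℕ) (hj : j ≤ (c i).length) :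
    Q.nodeAt c i j hj = Q.mkVar c (Q.rawNodeAt c i j hj) := rfl

lemma rawNodeAt_zero (c : Fin Q.m → List A) (i : Fin Q.m) (h : 0 ≤ (c i).length) :
    Q.rawNodeAt c i 0 h = Sum.inl (Q.src i) := by simp [rawNodeAt]; rfl

lemma rawNodeAt_len (c : Fin Q.m → List A) (i : Fin Q.m) (hne : (c i).length ≠ 0)
    (h : (c i).length ≤ (c i).length) :
    Q.rawNodeAt c i (c i).length h = Sum.inl (Q.tgt i) := by
  rw [rawNodeAt]; exact (dif_neg hne).trans (dif_pos rfl)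

lemma rawNodeAt_mid (c : Fin Q.m → List A) (i : Fin Q.m) (j : ℕ) (hj : j ≤ (c i).length)
    (h0 : j ≠ 0) (hl : j ≠ (c i).length) :
    Q.rawNodeAt c i j hj = Sum.inr ⟨i, ⟨j - 1, by omega⟩⟩ := by
  rw [rawNodeAt]; exact (dif_neg h0).trans (dif_neg hl)

lemma nodeAt_inj {c : Fin Q.m → List A} (hc : ∀ i, c i ≠ []) {i : Fin Q.m} {j j' : ℕ}
    (hj : j ≤ (c i).length) (hj' : j' ≤ (c i).length)
    (hor : Q.src i ≠ Q.tgt i ∨ (j < (c i).length ∧ j' < (c i).length))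
    (heq : Q.nodeAt c i j hj = Q.nodeAt c i j' hj') : j = j' := by
  have hlen : (c i).length ≠ 0 := fun h => hc i (List.length_eq_zero_iff.mp h)
  have hraw : Q.rawNodeAt c i j hj = Q.rawNodeAt c i j' hj' :=
    Q.mkVar_injective hc heq
  have hmid : ∀ (k : ℕ) (hk : k ≤ (c i).length) (h0 : k ≠ 0) (hl : k ≠ (c i).length),
      Q.rawNodeAt c i k hk = Sum.inr ⟨i, ⟨k - 1, by omega⟩⟩ := fun k hk h0 hl =>
    Q.rawNodeAt_mid c i k hk h0 hl
  by_cases h0 : j = 0 <;> by_cases h0' : j' = 0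
  · omega
  · -- j = 0, j' ≠ 0
    subst h0
    rw [Q.rawNodeAt_zero] at hraw
    by_cases hl' : j' = (c i).length
    · subst hl'
      rw [Q.rawNodeAt_len _ _ hlen] at hraw
      rcases hor with h | h
      · exact absurd (Sum.inl_injective hraw) h
      · omega
    · rw [hmid j' hj' h0' hl'] at hraw; simp at hraw
  · -- j ≠ 0, j' = 0
    subst h0'
    rw [Q.rawNodeAt_zero] at hraw
    by_cases hl : j = (c i).length
    · subst hl
      rw [Q.rawNodeAt_len _ _ hlen] at hraw
      rcases hor with h | h
      · exact absurd (Sum.inl_injective hraw).symm h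
      · omega
    · rw [hmid j hj h0 hl] at hraw; simp at hraw
  · -- both nonzero
    by_cases hl : j = (c i).length <;> by_cases hl' : j' = (c i).length
    · omega
    · subst hl
      rw [Q.rawNodeAt_len _ _ hlen, hmid j' hj' h0' hl'] at hraw; simp at hraw
    · subst hl'
      rw [Q.rawNodeAt_len _ _ hlen, hmid j hj h0 hl] at hraw; simp at hraw
    · rw [hmid j hj h0 hl, hmid j' hj' h0' hl'] at hraw
      have h2 := (Sigma.mk.inj_iff.mp (Sum.inr_injective hraw)).2
      rw [heq_iff_eq, Fin.mk.injEq] at h2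
      omega

end CRPQ

namespace CRPQ

variable {A : Type} {n : ℕ}

lemma evalMap (Q : CRPQ A n) (G : GraphDB A) (μ : Q.X → G.V)
    (hμ : Function.Injective μ) (π : (i : Fin Q.m) → List (A × G.V))
    (hw : ∀ i, Q.WitSimple G μ i (π i))
    (hdisj : ∀ i j, i ≠ j → ∀ x, x ∈ G.internal (μ (Q.src i)) (π i) →
        x ∉ G.internal (μ (Q.src j)) (π j))
    (havoid : ∀ i, ∀ x ∈ G.internal (μ (Q.src i)) (π i), ∀ z, x ≠ μ z)
    (hc : ∀ i, G.label (π i) ≠ []) :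
    ∃ e : Q.expVar (fun i => G.label (π i)) → G.V, Function.Injective e ∧
      (∀ u a v, (Q.expansion (fun i => G.label (π i))).Ed u a v → G.E (e u) a (e v)) ∧
      (∀ x, e (Q.mkVar _ (Sum.inl x)) = μ x) := by
  classical
  set c : Fin Q.m → List A := fun i => G.label (π i) with hcdef
  have hlen : ∀ i, (c i).length = (π i).length := fun i => List.length_map _
  set eRaw : Q.rawVar c → G.V := Sum.elim μ
    (fun p : Σ i : Fin Q.m, Fin ((c i).length - 1) =>
      G.nodeIdx (μ (Q.src p.1)) (π p.1) (p.2 + 1)) with heRaw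
  have hsound : ∀ a b : Q.rawVar c,
      Relation.EqvGen (Q.epsRel c) a b → eRaw a = eRaw b := by
    intro a b h
    rw [Q.eqvGen_epsRel_eq hc a b h]
  refine ⟨Quotient.lift eRaw hsound, ?_, ?_, ?_⟩
  case refine_3 => intro x; rfl
  -- preparation
  · -- injectivity
    have hint : ∀ (i : Fin Q.m) (t : Fin ((c i).length - 1)),
        G.nodeIdx (μ (Q.src i)) (π i) (t + 1) ∈ G.internal (μ (Q.src i)) (π i) :=
      fun i t => G.nodeIdx_succ_mem_internal _ _ t (by rw [← hlen]; exact t.isLt)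
    have hintnd : ∀ i, (G.internal (μ (Q.src i)) (π i)).Nodup := by
      intro i
      by_cases hst : Q.src i = Q.tgt i
      · exact G.internal_nodup_of_cycle ((hw i).2.1 hst)
      · exact G.internal_nodup_of_path ((hw i).2.2 hst)
    have heRawInj : Function.Injective eRaw := by
      rintro (x | ⟨i, t⟩) (y | ⟨i', t'⟩) h
      · exact congrArg Sum.inl (hμ h)
      · exact absurd h.symm (havoid i' _ (hint i' t') x)
      · exact absurd h (havoid i _ (hint i t) y)
      · simp only [heRaw, Sum.elim_inr] at h
        by_cases hii : i = i'
        · subst hii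
          congr 1
          have h1 : (G.internal (μ (Q.src i)) (π i))[(t : ℕ)]'(by
              rw [G.length_internal, ← hlen]; exact t.isLt) =
              (G.internal (μ (Q.src i)) (π i))[(t' : ℕ)]'(by
              rw [G.length_internal, ← hlen]; exact t'.isLt) := by
            rw [G.internal_getElem _ _ t (by rw [← hlen]; exact t.isLt),
              G.internal_getElem _ _ t' (by rw [← hlen]; exact t'.isLt)]
            exact h
          have := (List.Nodup.getElem_inj_iff (hintnd i)).mp h1
          exact congrArg _ (Fin.ext this)
        · refine absurd ?_ (hdisj i i' hii _ (hint i t))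
          rw [h]
          exact hint i' t'
    intro q q' h
    induction q using Quotient.ind
    induction q' using Quotient.ind
    exact congrArg _ (heRawInj h)
  · -- edges
    have hnode : ∀ (i : Fin Q.m) (j : ℕ) (hj : j ≤ (c i).length),
        Quotient.lift eRaw hsound (Q.nodeAt c i j hj) =
          G.nodeIdx (μ (Q.src i)) (π i) j := by
      intro i j hj
      show eRaw (Q.rawNodeAt c i j hj) = _
      have hlen0 : (c i).length ≠ 0 := fun h => hc i (List.length_eq_zero_iff.mp h)
      by_cases h0 : j = 0
      · subst h0
        rw [Q.rawNodeAt_zero]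
        show μ (Q.src i) = _
        rw [G.nodeIdx_zero]
      · by_cases hl : j = (c i).length
        · subst hl
          rw [Q.rawNodeAt_len _ _ hlen0]
          show μ (Q.tgt i) = _
          rw [hlen i, ← G.endOf_eq_nodeIdx]
          exact ((hw i).1.2.1).symm
        · rw [Q.rawNodeAt_mid _ _ _ _ h0 hl]
          show G.nodeIdx _ _ (j - 1 + 1) = _
          congr 1
          omega
    rintro u a v ⟨i, jf, hja, hu, hv⟩
    subst hu hv
    rw [hnode i jf (Nat.le_of_lt jf.isLt), hnode i (jf + 1) jf.isLt]
    have hch := G.chain_nodeIdx (hw i).1.1 jf (by rw [← hlen]; exact jf.isLt)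
    have ha : ((π i).get ⟨(jf : ℕ), by rw [← hlen]; exact jf.isLt⟩).fst = a := by
      rw [← hja]
      show _ = (c i).get jf
      simp [hcdef, GraphDB.label]
    rw [← ha]
    exact hch

end CRPQ

namespace CRPQ

variable {A : Type} {n : ℕ}

lemma construct (Q : CRPQ A n) (c : Fin Q.m → List A) (hc : ∀ i, c i ≠ [])
    (G : GraphDB A) (f : Q.expVar c → G.V) (hf : Function.Injective f)
    (hEd : ∀ u a v, (Q.expansion c).Ed u a v → G.E (f u) a (f v)) :
    ∃ π : (i : Fin Q.m) → List (A × G.V),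
      (∀ i, G.Chain (f (Q.mkVar c (Sum.inl (Q.src i)))) (π i)) ∧
      (∀ i, G.endOf (f (Q.mkVar c (Sum.inl (Q.src i)))) (π i)
          = f (Q.mkVar c (Sum.inl (Q.tgt i)))) ∧
      (∀ i, G.label (π i) = c i) ∧
      (∀ i, Q.src i = Q.tgt i → G.IsSimpleCycle (f (Q.mkVar c (Sum.inl (Q.src i)))) (π i)) ∧
      (∀ i, Q.src i ≠ Q.tgt i → G.IsSimplePath (f (Q.mkVar c (Sum.inl (Q.src i)))) (π i)) ∧
      (∀ i x, x ∈ G.internal (f (Q.mkVar c (Sum.inl (Q.src i)))) (π i) →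
        ∃ t : Fin ((c i).length - 1), x = f (Q.mkVar c (Sum.inr ⟨i, t⟩))) := by
  classical
  have hlen0 : ∀ i, (c i).length ≠ 0 := fun i h => hc i (List.length_eq_zero_iff.mp h)
  set η : (i : Fin Q.m) → ℕ → G.V :=
    fun i j => f (Q.nodeAt c i (min j (c i).length) (min_le_right _ _)) with hη
  have hηeq : ∀ (i : Fin Q.m) (j : ℕ) (hj : j ≤ (c i).length),
      η i j = f (Q.nodeAt c i j hj) := fun i j hj =>
    congrArg f (Q.nodeAt_congr c i (min_eq_left hj) _ _)
  have hstart : ∀ i, f (Q.mkVar c (Sum.inl (Q.src i))) = η i 0 := by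
    intro i
    rw [hηeq i 0 (Nat.zero_le _)]
    exact congrArg f (congrArg (Q.mkVar c) (Q.rawNodeAt_zero c i (Nat.zero_le _)).symm)
  have hend : ∀ i, η i (c i).length = f (Q.mkVar c (Sum.inl (Q.tgt i))) := by
    intro i
    rw [hηeq i (c i).length le_rfl]
    exact congrArg f (congrArg (Q.mkVar c) (Q.rawNodeAt_len c i (hlen0 i) le_rfl))
  refine ⟨fun i => G.pathOf (η i) (c i), ?_, ?_, ?_, ?_, ?_, ?_⟩
  · -- Chain
    intro i
    rw [hstart i]
    apply G.chain_pathOf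
    intro j hj
    rw [hηeq i j (Nat.le_of_lt hj), hηeq i (j + 1) hj]
    exact hEd _ _ _ ⟨i, ⟨j, hj⟩, rfl, rfl, rfl⟩
  · -- endOf
    intro i
    rw [hstart i, G.endOf_pathOf, hend i]
  · -- label
    intro i
    exact G.label_pathOf _ _
  · -- simple cycle
    intro i hst
    refine ⟨?_, ?_⟩
    · rw [hstart i, G.endOf_pathOf, hend i, ← hst]
      exact hstart i
    · show (_ :: ((G.pathOf (η i) (c i)).map Prod.snd).dropLast).Nodup
      rw [G.map_snd_pathOf, GraphDB.dropLast_ofFn, hstart i, List.nodup_cons]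
      constructor
      · intro hmem
        obtain ⟨t, ht⟩ := List.mem_ofFn.mp hmem
        have h' : η i (↑(⟨↑t, by omega⟩ : Fin (c i).length) + 1) = η i 0 := ht
        have h1 : (t : ℕ) + 1 ≤ (c i).length := by omega
        rw [hηeq i _ h1, hηeq i 0 (Nat.zero_le _)] at h'
        have := Q.nodeAt_inj hc h1 (Nat.zero_le _)
          (Or.inr ⟨by omega, by omega⟩) (hf h')
        omega
      · rw [List.nodup_ofFn]
        intro t t' h
        have h' : η i (↑(⟨↑t, by omega⟩ : Fin (c i).length) + 1)
            = η i (↑(⟨↑t', by omega⟩ : Fin (c i).length) + 1) := h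
        have h1 : (t : ℕ) + 1 ≤ (c i).length := by omega
        have h1' : (t' : ℕ) + 1 ≤ (c i).length := by omega
        rw [hηeq i _ h1, hηeq i _ h1'] at h'
        have := Q.nodeAt_inj hc h1 h1'
          (Or.inr ⟨by omega, by omega⟩) (hf h')
        exact Fin.ext (by omega)
  · -- simple path
    intro i hst
    show (G.nodes _ _).Nodup
    rw [hstart i, G.nodes_pathOf, List.nodup_ofFn]
    intro ⟨j, hj⟩ ⟨j', hj'⟩ h
    have h1 : j ≤ (c i).length := by omega
    have h1' : j' ≤ (c i).length := by omega
    have h' : η i j = η i j' := h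
    rw [hηeq i j h1, hηeq i j' h1'] at h'
    exact Fin.ext (Q.nodeAt_inj hc h1 h1' (Or.inl hst) (hf h'))
  · -- internal
    intro i x hx
    rw [G.internal_pathOf] at hx
    obtain ⟨t, ht⟩ := List.mem_ofFn.mp hx
    refine ⟨t, ?_⟩
    rw [← ht]
    show η i (↑t + 1) = _
    rw [hηeq i (t + 1) (by omega)]
    refine congrArg f (congrArg (Q.mkVar c) ?_)
    rw [Q.rawNodeAt_mid c i (t + 1) (by omega) (by omega) (by omega)]
    congr 1

end CRPQ

/-- For CRPQs `Q₁, Q₂` whose languages do not contain the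
empty word: `Q₁ ⊆_{q-inj} Q₂` iff for every expansion `E₁` of `Q₁` there is an
expansion `E₂` of `Q₂` with an injective homomorphism `E₂ →ⁱⁿʲ E₁`. -/
theorem qinj_containment_iff_expansions {A : Type} {n : ℕ} (Q₁ Q₂ : CRPQ A n)
    (hε₁ : ∀ i, ([] : List A) ∉ Q₁.lang i) (hε₂ : ∀ i, ([] : List A) ∉ Q₂.lang i) :
    ContainedQInj Q₁ Q₂ ↔
      ∀ c₁, Q₁.IsChoice c₁ → ∃ c₂, Q₂.IsChoice c₂ ∧
        ∃ h, (Q₂.expansion c₂).InjHom (Q₁.expansion c₁) h := by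
  constructor
  · -- containment implies expansion condition
    intro hcont c₁ hch₁
    have hc₁ : ∀ i, c₁ i ≠ [] := fun i h => hε₁ i (h ▸ hch₁ i)
    let G : GraphDB A := (Q₁.expansion c₁).toDB
    obtain ⟨π, hchain, hend, hlab, hcyc, hpath, hintc⟩ :=
      Q₁.construct c₁ hc₁ G id Function.injective_id (fun _ _ _ h => h)
    let μ : Q₁.X → G.V := fun x => Q₁.mkVar c₁ (Sum.inl x)
    have hμinj : Function.Injective μ :=
      fun x y h => Sum.inl_injective (Q₁.mkVar_injective hc₁ h)
    have hv : (fun j => μ (Q₁.free j)) ∈ Q₁.evalQInj G := by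
      refine ⟨μ, hμinj, fun j => rfl, π, ?_, ?_, ?_⟩
      · intro i
        exact ⟨⟨hchain i, hend i, by rw [hlab i]; exact hch₁ i⟩, hcyc i, hpath i⟩
      · intro i j hij x hxi hxj
        obtain ⟨t, ht⟩ := hintc i x hxi
        obtain ⟨t', ht'⟩ := hintc j x hxj
        have hm : Q₁.mkVar c₁ (Sum.inr ⟨i, t⟩) = Q₁.mkVar c₁ (Sum.inr ⟨j, t'⟩) :=
          ht.symm.trans ht'
        have := Sum.inr_injective (Q₁.mkVar_injective hc₁ hm)
        exact hij (Sigma.mk.inj_iff.mp this).1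
      · intro i x hx z hxz
        obtain ⟨t, ht⟩ := hintc i x hx
        have hm : Q₁.mkVar c₁ (Sum.inr ⟨i, t⟩) = Q₁.mkVar c₁ (Sum.inl z) :=
          ht.symm.trans hxz
        exact absurd (Q₁.mkVar_injective hc₁ hm) (by simp)
    obtain ⟨μ₂, hμ₂inj, hfree₂, π₂, hw₂, hdisj₂, havoid₂⟩ := hcont G hv
    have hch₂ : Q₂.IsChoice (fun i => G.label (π₂ i)) := fun i => (hw₂ i).1.2.2
    have hc₂ : ∀ i, G.label (π₂ i) ≠ [] := fun i h => hε₂ i (h ▸ hch₂ i)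
    obtain ⟨e, heinj, heEd, heμ⟩ := Q₂.evalMap G μ₂ hμ₂inj π₂ hw₂ hdisj₂ havoid₂ hc₂
    refine ⟨_, hch₂, e, ⟨⟨heEd, ?_⟩, heinj⟩⟩
    intro j
    exact (heμ (Q₂.free j)).trans (hfree₂ j)
  · -- expansion condition implies containment
    intro hyp G v hv
    obtain ⟨μ, hμinj, hfree, π, hw, hdisj, havoid⟩ := hv
    have hch₁ : Q₁.IsChoice (fun i => G.label (π i)) := fun i => (hw i).1.2.2
    have hc₁ : ∀ i, G.label (π i) ≠ [] := fun i h => hε₁ i (h ▸ hch₁ i)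
    obtain ⟨e, heinj, heEd, heμ⟩ := Q₁.evalMap G μ hμinj π hw hdisj havoid hc₁
    obtain ⟨c₂, hch₂, h, ⟨⟨hhEd, hhfree⟩, hhinj⟩⟩ := hyp _ hch₁
    have hc₂ : ∀ i, c₂ i ≠ [] := fun i hnil => hε₂ i (hnil ▸ hch₂ i)
    obtain ⟨π₂, hchain, hend, hlab, hcyc, hpath, hintc⟩ :=
      Q₂.construct c₂ hc₂ G (fun x => e (h x)) (heinj.comp hhinj)
        (fun u a w hed => heEd _ _ _ (hhEd u a w hed))
    refine ⟨fun x => e (h (Q₂.mkVar c₂ (Sum.inl x))), ?_, ?_, π₂, ?_, ?_, ?_⟩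
    · intro x y hxy
      exact Sum.inl_injective (Q₂.mkVar_injective hc₂ (hhinj (heinj hxy)))
    · intro j
      have h1 : h (Q₂.mkVar c₂ (Sum.inl (Q₂.free j))) = (Q₁.expansion _).free j :=
        hhfree j
      show e (h (Q₂.mkVar c₂ (Sum.inl (Q₂.free j)))) = v j
      rw [h1]
      exact (heμ (Q₁.free j)).trans (hfree j)
    · intro i
      exact ⟨⟨hchain i, hend i, by rw [hlab i]; exact hch₂ i⟩, hcyc i, hpath i⟩
    · intro i j hij x hxi hxj
      obtain ⟨t, ht⟩ := hintc i x hxi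
      obtain ⟨t', ht'⟩ := hintc j x hxj
      have hm : Q₂.mkVar c₂ (Sum.inr ⟨i, t⟩) = Q₂.mkVar c₂ (Sum.inr ⟨j, t'⟩) :=
        hhinj (heinj (ht.symm.trans ht'))
      have := Sum.inr_injective (Q₂.mkVar_injective hc₂ hm)
      exact hij (Sigma.mk.inj_iff.mp this).1
    · intro i x hx z hxz
      obtain ⟨t, ht⟩ := hintc i x hx
      have hm : Q₂.mkVar c₂ (Sum.inr ⟨i, t⟩) = Q₂.mkVar c₂ (Sum.inl z) :=
        hhinj (heinj (ht.symm.trans hxz))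
      exact absurd (Q₂.mkVar_injective hc₂ hm) (by simp)
end

section
/- For CRPQs Q₁ and Q₂ (with languages not containing the empty word), Q₁ is contained in Q₂ under standard semantics if and only if for every expansion E₁ of Q₁ there exists an expansion E₂ of Q₂ with a homomorphism E₂ → E₁. -/
section Helpers

namespace GraphDB

variable {A : Type} (G : GraphDB A)

/-- The `j`-th vertex of the path starting at `u` with steps `s`. -/
def vtx (u : G.V) (s : List (A × G.V)) (j : ℕ) : G.V :=
  (u :: s.map Prod.snd).getD j u

lemma vtx_zero (u : G.V) (s : List (A × G.V)) : G.vtx u s 0 = u := rfl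

lemma vtx_cons (u w : G.V) (a : A) (rest : List (A × G.V)) (k : ℕ)
    (hk : k ≤ rest.length) : G.vtx u ((a, w) :: rest) (k + 1) = G.vtx w rest k := by
  have h : k < (w :: rest.map Prod.snd).length := by simp; omega
  show (w :: rest.map Prod.snd).getD k u = (w :: rest.map Prod.snd).getD k w
  rw [List.getD_eq_getElem _ _ h, List.getD_eq_getElem _ _ h]

private lemma getLastD_eq_getD : ∀ (l : List α) (u : α),
    l.getLastD u = (u :: l).getD l.length u
  | [], _ => rfl
  | a :: l, u => by
    rw [List.getLastD_cons]
    have h : l.length < (a :: l).length := by simp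
    show l.getLastD a = (a :: l).getD l.length u
    rw [getLastD_eq_getD l a, List.getD_eq_getElem _ _ h, List.getD_eq_getElem _ _ h]

lemma endOf_eq_vtx (u : G.V) (s : List (A × G.V)) :
    G.endOf u s = G.vtx u s s.length := by
  have := getLastD_eq_getD (s.map Prod.snd) u
  simpa [endOf, vtx] using this

lemma chain_iff : ∀ (s : List (A × G.V)) (u : G.V), G.Chain u s ↔
    ∀ j (hj : j < s.length), G.E (G.vtx u s j) (s.get ⟨j, hj⟩).1 (G.vtx u s (j + 1))
  | [], u => by simp [Chain]
  | (a, w) :: rest, u => by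
    show (G.E u a w ∧ G.Chain w rest) ↔ _
    rw [chain_iff rest w]
    constructor
    · rintro ⟨h0, hrest⟩ j hj
      match j with
      | 0 =>
        have : G.vtx u ((a, w) :: rest) 1 = G.vtx w rest 0 :=
          G.vtx_cons u w a rest 0 (Nat.zero_le _)
        rw [this]; exact h0
      | j + 1 =>
        have hj' : j < rest.length := by simpa using hj
        rw [G.vtx_cons u w a rest j (le_of_lt hj'), G.vtx_cons u w a rest (j+1) hj']
        exact hrest j hj'
    · intro h
      constructor
      · have := h 0 (by simp)
        rw [G.vtx_cons u w a rest 0 (Nat.zero_le _)] at this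
        exact this
      · intro j hj
        have := h (j + 1) (by simpa using Nat.succ_lt_succ hj)
        rw [G.vtx_cons u w a rest j (le_of_lt hj), G.vtx_cons u w a rest (j+1) hj] at this
        exact this

end GraphDB

namespace CRPQ

variable {A : Type} {n : ℕ}

lemma eqvGen_eq {Q : CRPQ A n} {c : Fin Q.m → List A} (hne : ∀ i, c i ≠ [])
    {a b : Q.rawVar c} (h : Relation.EqvGen (Q.epsRel c) a b) : a = b := by
  induction h with
  | rel a b h => obtain ⟨i, hi, _, _⟩ := h; exact absurd hi (hne i)
  | refl => rfl
  | symm _ _ _ ih => exact ih.symm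
  | trans _ _ _ _ _ ih1 ih2 => exact ih1.trans ih2

/-- Lemma A: witnessing paths yield a homomorphism from the corresponding
expansion into the database. -/
lemma exists_hom_of_wit (Q : CRPQ A n) (G : GraphDB A)
    (μ : Q.X → G.V) (s : Fin Q.m → List (A × G.V))
    (hw : ∀ i, Q.Wit G μ i (s i)) (hne : ∀ i, s i ≠ []) :
    ∃ h : Q.expVar (fun i => G.label (s i)) → G.V,
      (∀ x, h (Quotient.mk _ (Sum.inl x)) = μ x) ∧
      (∀ u a v, (Q.expansion (fun i => G.label (s i))).Ed u a v →
        G.E (h u) a (h v)) := by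
  classical
  set c : Fin Q.m → List A := fun i => G.label (s i) with hc
  have hlen : ∀ i, (c i).length = (s i).length := fun i => by
    simp [hc, GraphDB.label]
  have hcne : ∀ i, c i ≠ [] := fun i => by
    simp [hc, GraphDB.label]; exact hne i
  let f : Q.rawVar c → G.V := fun x =>
    match x with
    | Sum.inl x => μ x
    | Sum.inr ⟨i, k⟩ => G.vtx (μ (Q.src i)) (s i) (k + 1)
  have hresp : ∀ a b : Q.rawVar c, Relation.EqvGen (Q.epsRel c) a b → f a = f b := by
    intro a b hab; rw [eqvGen_eq hcne hab]
  refine ⟨Quotient.lift f hresp, fun x => rfl, ?_⟩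
  have hnode : ∀ i j (hj : j ≤ (c i).length),
      f (Q.rawNodeAt c i j hj) = G.vtx (μ (Q.src i)) (s i) j := by
    intro i j hj
    unfold rawNodeAt
    by_cases h0 : j = 0
    · subst h0; rfl
    by_cases hl : j = (c i).length
    · have e : Q.rawNodeAt c i j hj = Sum.inl (Q.tgt i) := (dif_neg h0).trans (dif_pos hl)
      show f (Q.rawNodeAt c i j hj) = _
      rw [e]; subst hl
      show μ (Q.tgt i) = _
      rw [hlen i, ← G.endOf_eq_vtx]
      exact ((hw i).2.1).symm
    · have e : Q.rawNodeAt c i j hj = Sum.inr ⟨i, ⟨j - 1, by omega⟩⟩ :=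
        (dif_neg h0).trans (dif_neg hl)
      show f (Q.rawNodeAt c i j hj) = _
      rw [e]
      show G.vtx (μ (Q.src i)) (s i) (j - 1 + 1) = _
      congr 1; omega
  rintro u a v ⟨i, ⟨j, hj⟩, hget, hu, hv⟩
  have hu' : Quotient.lift f hresp u = G.vtx (μ (Q.src i)) (s i) j := by
    rw [hu]; exact hnode i j (Nat.le_of_lt hj)
  have hv' : Quotient.lift f hresp v = G.vtx (μ (Q.src i)) (s i) (j + 1) := by
    rw [hv]; exact hnode i (j + 1) hj
  rw [hu', hv']
  have hjs : j < (s i).length := by rw [← hlen i]; exact hj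
  have := (G.chain_iff (s i) (μ (Q.src i))).mp (hw i).1 j hjs
  have hgeta : ((s i).get ⟨j, hjs⟩).1 = a := by
    rw [← hget]
    simp [hc, GraphDB.label, List.get_eq_getElem]
  rwa [hgeta] at this

/-- Lemma B: a homomorphism from an expansion into a database yields
membership in the standard semantics. -/
lemma mem_evalSt_of_hom (Q : CRPQ A n) (G : GraphDB A)
    (c : Fin Q.m → List A) (hch : Q.IsChoice c) (hne : ∀ i, c i ≠ [])
    (v : Fin n → G.V) (g : Q.expVar c → G.V)
    (hEd : ∀ u a w, (Q.expansion c).Ed u a w → G.E (g u) a (g w))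
    (hfree : ∀ j, g ((Q.expansion c).free j) = v j) :
    v ∈ Q.evalSt G := by
  classical
  refine ⟨fun x => g (Quotient.mk _ (Sum.inl x)), hfree, ?_⟩
  intro i
  set μ : Q.X → G.V := fun x => g (Quotient.mk _ (Sum.inl x)) with hμ
  have hlpos : (c i).length ≠ 0 := by
    intro h; exact hne i (List.length_eq_zero_iff.mp h)
  refine ⟨List.ofFn (fun j : Fin (c i).length =>
    ((c i).get j, g (Q.nodeAt c i (j + 1) j.isLt))), ?_, ?_, ?_⟩
  · set si := List.ofFn (fun j : Fin (c i).length =>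
      ((c i).get j, g (Q.nodeAt c i (j + 1) j.isLt))) with hsi
    have hslen : si.length = (c i).length := by simp [hsi]
    have hstart : μ (Q.src i) = g (Q.nodeAt c i 0 (Nat.zero_le _)) := by
      simp [hμ, nodeAt, rawNodeAt]
    have hvtx : ∀ j (hj : j ≤ (c i).length),
        G.vtx (μ (Q.src i)) si j = g (Q.nodeAt c i j hj) := by
      intro j hj
      match j with
      | 0 => rw [G.vtx_zero]; exact hstart
      | k + 1 =>
        show (μ (Q.src i) :: si.map Prod.snd).getD (k + 1) _ = _
        rw [List.getD_cons_succ]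
        have hmap : si.map Prod.snd =
            List.ofFn (fun j : Fin (c i).length => g (Q.nodeAt c i (j + 1) j.isLt)) := by
          rw [hsi, List.map_ofFn]; rfl
        have hk : k < (si.map Prod.snd).length := by
          simp [hslen]; omega
        rw [List.getD_eq_getElem _ _ hk]
        simp only [hmap]
        have hk2 : k < (List.ofFn (fun j : Fin (c i).length =>
            g (Q.nodeAt c i (j + 1) j.isLt))).length := by simpa [hmap] using hk
        rw [List.getElem_ofFn hk2]
    rw [G.chain_iff]
    intro j hj
    have hj' : j < (c i).length := by rwa [hslen] at hj
    rw [hvtx j (le_of_lt hj'), hvtx (j + 1) hj']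
    have hget : (si.get ⟨j, hj⟩).1 = (c i).get ⟨j, hj'⟩ := by
      simp [hsi, List.get_eq_getElem, List.getElem_ofFn]
    rw [hget]
    exact hEd _ _ _ ⟨i, ⟨j, hj'⟩, rfl, rfl, rfl⟩
  · set si := List.ofFn (fun j : Fin (c i).length =>
      ((c i).get j, g (Q.nodeAt c i (j + 1) j.isLt))) with hsi
    have hslen : si.length = (c i).length := by simp [hsi]
    have hstart : μ (Q.src i) = g (Q.nodeAt c i 0 (Nat.zero_le _)) := by
      simp [hμ, nodeAt, rawNodeAt]
    have hvtx : ∀ j (hj : j ≤ (c i).length),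
        G.vtx (μ (Q.src i)) si j = g (Q.nodeAt c i j hj) := by
      intro j hj
      match j with
      | 0 => rw [G.vtx_zero]; exact hstart
      | k + 1 =>
        show (μ (Q.src i) :: si.map Prod.snd).getD (k + 1) _ = _
        rw [List.getD_cons_succ]
        have hmap : si.map Prod.snd =
            List.ofFn (fun j : Fin (c i).length => g (Q.nodeAt c i (j + 1) j.isLt)) := by
          rw [hsi, List.map_ofFn]; rfl
        have hk : k < (si.map Prod.snd).length := by
          simp [hslen]; omega
        rw [List.getD_eq_getElem _ _ hk]
        simp only [hmap]
        have hk2 : k < (List.ofFn (fun j : Fin (c i).length =>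
            g (Q.nodeAt c i (j + 1) j.isLt))).length := by simpa [hmap] using hk
        rw [List.getElem_ofFn hk2]
    rw [G.endOf_eq_vtx, hslen, hvtx (c i).length (le_refl _)]
    show g (Q.nodeAt c i (c i).length (le_refl _)) = μ (Q.tgt i)
    simp [hμ, nodeAt, rawNodeAt, hlpos]
  · have : GraphDB.label G (List.ofFn (fun j : Fin (c i).length =>
        ((c i).get j, g (Q.nodeAt c i (j + 1) j.isLt)))) = c i := by
      simp [GraphDB.label, List.map_ofFn]
      exact List.ofFn_getElem (xs := c i)
    rw [this]
    exact hch i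

end CRPQ

end Helpers

/-- For CRPQs `Q₁, Q₂` whose languages do not contain the
empty word: `Q₁ ⊆_{st} Q₂` iff for every expansion `E₁` of `Q₁` there is an
expansion `E₂` of `Q₂` with a homomorphism `E₂ → E₁`. -/
theorem st_containment_iff_expansions {A : Type} {n : ℕ} (Q₁ Q₂ : CRPQ A n)
    (hε₁ : ∀ i, ([] : List A) ∉ Q₁.lang i) (hε₂ : ∀ i, ([] : List A) ∉ Q₂.lang i) :
    ContainedSt Q₁ Q₂ ↔
      ∀ c₁, Q₁.IsChoice c₁ → ∃ c₂, Q₂.IsChoice c₂ ∧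
        ∃ h, (Q₂.expansion c₂).Hom (Q₁.expansion c₁) h := by
  classical
  constructor
  · intro hcont c₁ hch₁
    set G : GraphDB A := (Q₁.expansion c₁).toDB with hG
    set v : Fin n → G.V := (Q₁.expansion c₁).free with hv
    have hne₁ : ∀ i, c₁ i ≠ [] := fun i h => hε₁ i (h ▸ hch₁ i)
    have hmem : v ∈ Q₁.evalSt G :=
      Q₁.mem_evalSt_of_hom G c₁ hch₁ hne₁ v id (fun u a w h => h) (fun j => rfl)
    obtain ⟨μ₂, hfree₂, hw₂⟩ := hcont G hmem
    choose s hs using hw₂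
    have hne : ∀ i, s i ≠ [] := by
      intro i h
      have := (hs i).2.2
      rw [h] at this
      exact hε₂ i this
    obtain ⟨h, hinl, hEd⟩ := Q₂.exists_hom_of_wit G μ₂ s hs hne
    refine ⟨fun i => G.label (s i), fun i => (hs i).2.2, h, hEd, ?_⟩
    intro j
    show h (Quotient.mk _ (Sum.inl (Q₂.free j))) = v j
    rw [hinl]
    exact hfree₂ j
  · intro hexp G v hv₁
    obtain ⟨μ₁, hfree₁, hw₁⟩ := hv₁
    choose s hs using hw₁
    have hne : ∀ i, s i ≠ [] := by
      intro i h
      have := (hs i).2.2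
      rw [h] at this
      exact hε₁ i this
    set c₁ : Fin Q₁.m → List A := fun i => G.label (s i) with hc₁
    have hch₁ : Q₁.IsChoice c₁ := fun i => (hs i).2.2
    obtain ⟨c₂, hch₂, h, hhEd, hhfree⟩ := hexp c₁ hch₁
    obtain ⟨g, ginl, gEd⟩ := Q₁.exists_hom_of_wit G μ₁ s hs hne
    have hne₂ : ∀ i, c₂ i ≠ [] := fun i hnil => hε₂ i (hnil ▸ hch₂ i)
    exact Q₂.mem_evalSt_of_hom G c₂ hch₂ hne₂ v (g ∘ h)
      (fun u a w hed => gEd _ _ _ (hhEd _ _ _ hed))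
      (fun j => by
        show g (h ((Q₂.expansion c₂).free j)) = v j
        rw [hhfree j]
        show g (Quotient.mk _ (Sum.inl (Q₁.free j))) = v j
        rw [ginl]
        exact hfree₁ j)
end

section
/- There exist Boolean CRPQs Q₁' and Q₂' such that Q₁' ⊆_{a-inj} Q₂' holds but Q₁' ⊆_{q-inj} Q₂' fails. Concretely, for Q₁' = (x →^{a} y ∧ x →^{b} y) and Q₂' = (x →^{a} y ∧ x' →^{b} y'), containment holds under atom-injective (and standard) semantics but fails under query-injective semantics. -/
/-- The Boolean CRPQ `Q₁' = x →^a y ∧ x →^b y` (with `a = 0`, `b = 1`). -/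
def Q₁' : CRPQ (Fin 2) 0 where
  X := Fin 2
  fin := inferInstance
  m := 2
  src := ![0, 0]
  lang := ![{[0]}, {[1]}]
  tgt := ![1, 1]
  free := fun j => j.elim0

/-- The Boolean CRPQ `Q₂' = x →^a y ∧ x' →^b y'` (four distinct variables). -/
def Q₂' : CRPQ (Fin 2) 0 where
  X := Fin 4
  fin := inferInstance
  m := 2
  src := ![0, 2]
  lang := ![{[0]}, {[1]}]
  tgt := ![1, 3]
  free := fun j => j.elim0

/-- `Q₁' ⊆_{a-inj} Q₂'` and `Q₁' ⊆_{st} Q₂'` hold, but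
`Q₁' ⊆_{q-inj} Q₂'` fails. -/
theorem ainj_containment_not_qinj :
    ContainedAInj Q₁' Q₂' ∧ ContainedSt Q₁' Q₂' ∧ ¬ ContainedQInj Q₁' Q₂' := by
  refine ⟨?_, ?_, ?_⟩
  · intro G v hv
    obtain ⟨μ, -, hw⟩ := hv
    refine ⟨fun x => μ ((![0,1,0,1] : Fin 4 → Fin 2) x), fun j => j.elim0, fun i => ?_⟩
    rcases i with ⟨iv, hi⟩
    have hi' : iv < 2 := hi
    interval_cases iv
    · obtain ⟨s, hs⟩ := hw ⟨0, show (0:ℕ) < 2 by omega⟩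
      exact ⟨s, hs.1, fun h => absurd h (show (0 : Fin 4) ≠ 1 by decide),
        fun _ => hs.2.2 (show (0 : Fin 2) ≠ 1 by decide)⟩
    · obtain ⟨s, hs⟩ := hw ⟨1, show (1:ℕ) < 2 by omega⟩
      exact ⟨s, hs.1, fun h => absurd h (show (2 : Fin 4) ≠ 3 by decide),
        fun _ => hs.2.2 (show (0 : Fin 2) ≠ 1 by decide)⟩
  · intro G v hv
    obtain ⟨μ, -, hw⟩ := hv
    refine ⟨fun x => μ ((![0,1,0,1] : Fin 4 → Fin 2) x), fun j => j.elim0, fun i => ?_⟩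
    rcases i with ⟨iv, hi⟩
    have hi' : iv < 2 := hi
    interval_cases iv
    · exact hw ⟨0, show (0:ℕ) < 2 by omega⟩
    · exact hw ⟨1, show (1:ℕ) < 2 by omega⟩
  · intro hcon
    set G : GraphDB (Fin 2) := ⟨Fin 2, inferInstance, fun u _ w => u = 0 ∧ w = 1⟩ with hG
    have h1 : (fun j => j.elim0 : Fin 0 → G.V) ∈ Q₁'.evalQInj G := by
      refine ⟨id, Function.injective_id, fun j => j.elim0,
        fun i => (![[(0,1)],[(1,1)]] : Fin 2 → List (Fin 2 × Fin 2)) ⟨i.1, i.2⟩,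
        ?_, ?_, ?_⟩
      · intro i
        rcases i with ⟨iv, hi⟩
        have hi' : iv < 2 := hi
        interval_cases iv
        · exact ⟨⟨⟨⟨rfl, rfl⟩, trivial⟩, rfl, rfl⟩,
            fun h => absurd h (show (0 : Fin 2) ≠ 1 by decide),
            fun _ => (show ([0,1] : List (Fin 2)).Nodup by decide)⟩
        · exact ⟨⟨⟨⟨rfl, rfl⟩, trivial⟩, rfl, rfl⟩,
            fun h => absurd h (show (0 : Fin 2) ≠ 1 by decide),
            fun _ => (show ([0,1] : List (Fin 2)).Nodup by decide)⟩
      · intro i j hij x hx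
        rcases i with ⟨iv, hi⟩
        have hi' : iv < 2 := hi
        interval_cases iv <;>
          exact absurd hx (show x ∉ ([] : List (Fin 2)) by simp)
      · intro i x hx
        rcases i with ⟨iv, hi⟩
        have hi' : iv < 2 := hi
        interval_cases iv <;>
          exact absurd hx (show x ∉ ([] : List (Fin 2)) by simp)
    obtain ⟨ν, hinj, -⟩ := hcon G h1
    have key : ∀ a b c : Fin 2, a ≠ b → a ≠ c → b ≠ c → False := by decide
    exact key (ν (show Q₂'.X from (0 : Fin 4))) (ν (show Q₂'.X from (1 : Fin 4)))
      (ν (show Q₂'.X from (2 : Fin 4)))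
      (hinj.ne (show (0 : Fin 4) ≠ 1 by decide))
      (hinj.ne (show (0 : Fin 4) ≠ 2 by decide))
      (hinj.ne (show (1 : Fin 4) ≠ 2 by decide))
end

section
/- For any two conjunctive queries Q₁ and Q₂ over an edge-labeled alphabet, Q₁ ⊆_{a-inj} Q₂ holds if and only if there exists a non-contracting homomorphism from Q₂ to Q₁. -/
/-- A conjunctive query, presented as a CRPQ all of whose atoms carry a single
letter. -/
structure CQA (A : Type) (n : ℕ) where
  X : Type
  fin : Finite X
  m : ℕ
  src : Fin m → X
  lab : Fin m → A
  tgt : Fin m → X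
  free : Fin n → X

namespace CQA

variable {A : Type} {n : ℕ}

/-- The CRPQ associated with a CQ: every atom's language is the corresponding
singleton one-letter language. -/
def toCRPQ (C : CQA A n) : CRPQ A n :=
  ⟨C.X, C.fin, C.m, C.src, fun i => {[C.lab i]}, C.tgt, C.free⟩

/-- The labeled-edge relation of a CQ. -/
def Edge (C : CQA A n) (x : C.X) (a : A) (y : C.X) : Prop :=
  ∃ i, C.src i = x ∧ C.lab i = a ∧ C.tgt i = y

/-- A CQ viewed as a graph database whose nodes are its variables and whose
labeled edges are its atoms. -/
def toDB (C : CQA A n) : GraphDB A := ⟨C.X, C.fin, C.Edge⟩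

/-- A homomorphism between CQs (atoms map to atoms, free variables to free
variables). -/
def HomTo (C D : CQA A n) (h : C.X → D.X) : Prop :=
  (∀ i, D.Edge (h (C.src i)) (C.lab i) (h (C.tgt i))) ∧
    ∀ j, h (C.free j) = D.free j

/-- `h` is non-contracting: it never identifies the two distinct endpoints of
an atom of `C`. -/
def NonContracting (C : CQA A n) {Y : Type} (h : C.X → Y) : Prop :=
  ∀ i, C.src i ≠ C.tgt i → h (C.src i) ≠ h (C.tgt i)

end CQA

lemma single_label_form {A : Type} {G : GraphDB A} {a : A}
    (s : List (A × G.V)) (hs : G.label s = [a]) :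
    ∃ w : G.V, s = [(a, w)] := by
  unfold GraphDB.label at hs
  match s with
  | [] => simp at hs
  | [(b, w)] =>
    simp at hs
    exact ⟨w, by simp [hs]⟩
  | p :: q :: r => simp at hs

/-- From a simple witness of a one-letter atom, extract the edge facts. -/
lemma witSimple_edge {A : Type} {n : ℕ} (C : CQA A n) (G : GraphDB A)
    (μ : C.X → G.V) (i : Fin C.m) (s : List (A × G.V))
    (hw : C.toCRPQ.WitSimple G μ i s) :
    G.E (μ (C.src i)) (C.lab i) (μ (C.tgt i)) ∧
      (C.src i ≠ C.tgt i → μ (C.src i) ≠ μ (C.tgt i)) := by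
  obtain ⟨⟨hchain, hend, hlab⟩, hcyc, hpath⟩ := hw
  simp only [CQA.toCRPQ, Set.mem_singleton_iff] at hlab
  obtain ⟨w, rfl⟩ := single_label_form s hlab
  simp only [GraphDB.Chain] at hchain
  simp only [GraphDB.endOf, List.map_cons, List.map_nil] at hend
  simp only [List.getLastD] at hend
  subst hend
  refine ⟨hchain.1, ?_⟩
  intro hne
  have hsp := hpath hne
  simp only [GraphDB.IsSimplePath, GraphDB.nodes, List.map_cons, List.map_nil,
    List.nodup_cons, List.mem_singleton] at hsp
  exact hsp.1

/-- For conjunctive queries `Q₁, Q₂`, containment under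
atom-injective semantics holds iff there is a non-contracting homomorphism
from `Q₂` to `Q₁`. -/
theorem cq_ainj_containment_iff_noncontracting_hom {A : Type} {n : ℕ}
    (Q₁ Q₂ : CQA A n) :
    ContainedAInj Q₁.toCRPQ Q₂.toCRPQ ↔
      ∃ h : Q₂.X → Q₁.X, Q₂.HomTo Q₁ h ∧ Q₂.NonContracting h := by
  constructor
  · intro hc
    -- canonical database
    set G := Q₁.toDB with hG
    have hv : (fun j => Q₁.free j) ∈ Q₁.toCRPQ.evalAInj G := by
      refine ⟨id, fun j => rfl, fun k => ?_⟩
      refine ⟨[(Q₁.lab k, Q₁.tgt k)], ⟨⟨⟨⟨k, rfl, rfl, rfl⟩, trivial⟩, rfl, rfl⟩,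
        ?_, ?_⟩⟩
      · intro heq
        constructor
        · simp only [GraphDB.endOf, List.map_cons, List.map_nil, List.getLastD]
          exact heq.symm
        · exact List.nodup_singleton _
      · intro hne
        simp [GraphDB.IsSimplePath, GraphDB.nodes]
        exact List.Nodup.cons (fun hm => hne (List.mem_singleton.mp hm)) (List.nodup_singleton _)
    have hv2 := hc G hv
    obtain ⟨μ, hfree, hwit⟩ := hv2
    refine ⟨μ, ⟨?_, hfree⟩, ?_⟩
    · intro i
      obtain ⟨s, hs⟩ := hwit i
      exact (witSimple_edge Q₂ G μ i s hs).1
    · intro i hne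
      obtain ⟨s, hs⟩ := hwit i
      exact (witSimple_edge Q₂ G μ i s hs).2 hne
  · rintro ⟨h, ⟨hedge, hfree⟩, hnc⟩
    intro G v ⟨μ, hμfree, hwit⟩
    refine ⟨μ ∘ h, ?_, ?_⟩
    · intro j
      show μ (h (Q₂.free j)) = v j
      rw [hfree j]; exact hμfree j
    · intro i
      obtain ⟨k, hk1, hk2, hk3⟩ := hedge i
      obtain ⟨s, ⟨hchain, hend, hlab⟩, hcyc, hpath⟩ := hwit k
      have key : Q₁.src k ≠ Q₁.tgt k → μ (Q₁.src k) ≠ μ (Q₁.tgt k) :=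
        (witSimple_edge Q₁ G μ k s ⟨⟨hchain, hend, hlab⟩, hcyc, hpath⟩).2
      refine ⟨s, ⟨?_, ?_, ?_⟩, ?_, ?_⟩
      · show G.Chain (μ (h (Q₂.src i))) s
        rw [← hk1]; exact hchain
      · show G.endOf (μ (h (Q₂.src i))) s = μ (h (Q₂.tgt i))
        rw [← hk1, ← hk3]; exact hend
      · show G.label s ∈ ({[Q₂.lab i]} : Set (List A))
        rw [← hk2]; exact hlab
      · intro heq
        have : Q₁.src k = Q₁.tgt k :=
          hk1.trans ((congrArg h heq).trans hk3.symm)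
        show G.IsSimpleCycle (μ (h (Q₂.src i))) s
        rw [← hk1]
        rcases eq_or_ne (Q₁.src k) (Q₁.tgt k) with h' | h'
        · exact hcyc this
        · exact absurd this h'
      · intro hne
        have hne' : Q₁.src k ≠ Q₁.tgt k := by
          intro heq; exact hnc i hne (by rw [← hk1, ← hk3, heq])
        show G.IsSimplePath (μ (h (Q₂.src i))) s
        rw [← hk1]
        exact hpath hne'
end

section
/- For a CRPQ Q, a graph database G, and a tuple v̄ of nodes: there exists an expansion E of Q with an atom-injective homomorphism E →^{a-inj} (G, v̄) if and only if there exists an atom-injective expansion F of Q with an injective homomorphism F →^{inj} (G, v̄). -/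
/-- For a CRPQ `Q`, a graph database `G` and a tuple `v̄`:
there is an expansion `E` of `Q` with an atom-injective homomorphism
`E →^{a-inj} (G, v̄)` iff there is an atom-injective expansion `F` of `Q` with
an injective homomorphism `F →ⁱⁿʲ (G, v̄)`. -/
theorem ainj_hom_iff_ainj_expansion {A : Type} {n : ℕ} (Q : CRPQ A n)
    (G : GraphDB A) (v : Fin n → G.V) :
    (∃ c, Q.IsChoice c ∧ ∃ h, Q.AInjHomDB c G v h) ↔
      (∃ F : CQ A n, Q.IsAInjExpansion F ∧ ∃ g, F.InjHomDB G v g) := by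
  constructor
  · rintro ⟨c, hc, h, ⟨⟨hedge, hfree⟩, hainj⟩⟩
    classical
    let s : Setoid (Q.expVar c) := Setoid.ker h
    refine ⟨⟨Quotient s, ?_,
        fun u a w => ∃ u' w', Quotient.mk s u' = u ∧ Quotient.mk s w' = w ∧
          (Q.expansion c).Ed u' a w',
        fun j => Quotient.mk s ((Q.expansion c).free j)⟩, ?_, ?_⟩
    · haveI : Finite (Q.expVar c) := (Q.expansion c).fin
      exact Finite.of_surjective (Quotient.mk s) (fun q => Quot.exists_rep q)
    · refine ⟨c, hc, Quotient.mk s, fun q => Quot.exists_rep q,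
        fun u a w => Iff.rfl, fun j => rfl, ?_⟩
      intro x y hrel hne heq
      exact hainj x y hrel hne (Quotient.exact heq)
    · refine ⟨Quotient.lift h (fun a b hab => hab), ⟨⟨?_, ?_⟩, ?_⟩⟩
      · rintro x a y ⟨u', w', hu, hw, he⟩
        subst hu; subst hw
        exact hedge _ _ _ he
      · intro j
        exact hfree j
      · intro a b
        induction a using Quotient.ind
        induction b using Quotient.ind
        intro hab
        exact Quotient.sound hab
  · rintro ⟨F, ⟨c, hc, ρ, hsurj, hEd, hfreeF, hρ⟩, g, ⟨⟨gedge, gfree⟩, ginj⟩⟩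
    refine ⟨c, hc, g ∘ ρ, ⟨⟨?_, ?_⟩, ?_⟩⟩
    · intro x a y he
      exact gedge _ _ _ ((hEd _ _ _).mpr ⟨x, y, rfl, rfl, he⟩)
    · intro j
      have : ρ ((Q.expansion c).free j) = F.free j := (hfreeF j).symm
      show g (ρ ((Q.expansion c).free j)) = v j
      rw [this]
      exact gfree j
    · intro x y hrel hne heq
      exact hρ x y hrel hne (ginj heq)
end

section
/- If h : Q₂ → Q₁ is a non-contracting homomorphism between CQs, then for every atom-injective expansion F₁ of Q₁ there exists an atom-injective expansion F₂ of Q₂ and an injective homomorphism F₂ →^{inj} F₁; consequently Q₁ ⊆_{a-inj} Q₂. -/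
namespace CRPQ

lemma eqvGen_eq_of_nonempty {A : Type} {n : ℕ} (Q : CRPQ A n)
    {c : Fin Q.m → List A} (hc : ∀ i, c i ≠ [])
    {a b : Q.rawVar c} (hab : Relation.EqvGen (Q.epsRel c) a b) : a = b := by
  induction hab with
  | rel _ _ hr => obtain ⟨i, hi, _, _⟩ := hr; exact absurd hi (hc i)
  | refl => rfl
  | symm _ _ _ ih => exact ih.symm
  | trans _ _ _ _ _ ih1 ih2 => exact ih1.trans ih2

lemma mk_injective_of_nonempty {A : Type} {n : ℕ} (Q : CRPQ A n)
    {c : Fin Q.m → List A} (hc : ∀ i, c i ≠ []) :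
    Function.Injective
      (Quotient.mk (Relation.EqvGen.setoid (Q.epsRel c)) : Q.rawVar c → Q.expVar c) :=
  fun _ _ hab => Q.eqvGen_eq_of_nonempty hc (Quotient.exact hab)

lemma nodeAt_zero {A : Type} {n : ℕ} (Q : CRPQ A n)
    (c : Fin Q.m → List A) (i : Fin Q.m) (h0 : (0:ℕ) ≤ (c i).length) :
    Q.nodeAt c i 0 h0 = Quotient.mk _ (Sum.inl (Q.src i)) := by
  simp [nodeAt, rawNodeAt]; rfl

lemma nodeAt_last {A : Type} {n : ℕ} (Q : CRPQ A n)
    (c : Fin Q.m → List A) (i : Fin Q.m) (hne : (c i).length ≠ 0)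
    (hl : (c i).length ≤ (c i).length) :
    Q.nodeAt c i (c i).length hl = Quotient.mk _ (Sum.inl (Q.tgt i)) := by
  simp [nodeAt, rawNodeAt, hne]; rfl

end CRPQ

/-- If `h : Q₂ → Q₁` is a non-contracting homomorphism
between CQs, then every atom-injective expansion `F₁` of `Q₁` admits an
atom-injective expansion `F₂` of `Q₂` with an injective homomorphism
`F₂ →ⁱⁿʲ F₁`; consequently `Q₁ ⊆_{a-inj} Q₂`. -/
theorem noncontracting_hom_gives_ainj_containment {A : Type} {n : ℕ}
    (Q₁ Q₂ : CQA A n) (h : Q₂.X → Q₁.X)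
    (hhom : Q₂.HomTo Q₁ h) (hnc : Q₂.NonContracting h) :
    (∀ F₁ : CQ A n, Q₁.toCRPQ.IsAInjExpansion F₁ →
      ∃ F₂ : CQ A n, Q₂.toCRPQ.IsAInjExpansion F₂ ∧ ∃ g, F₂.InjHom F₁ g) ∧
    ContainedAInj Q₁.toCRPQ Q₂.toCRPQ := by
  classical
  -- the (forced) word choices
  set c₁ : Fin Q₁.toCRPQ.m → List A := fun i => [Q₁.lab i] with hc₁def
  set c₂ : Fin Q₂.toCRPQ.m → List A := fun i => [Q₂.lab i] with hc₂def
  have hc₂ne : ∀ i, c₂ i ≠ [] := fun i => by simp [hc₂def]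
  have hc₁ne : ∀ i, c₁ i ≠ [] := fun i => by simp [hc₁def]
  constructor
  · rintro F₁ ⟨c, hc, ρ₁, hρsurj, hρEd, hρfree, hρinj⟩
    have hcforce : c = c₁ := by
      funext i
      have := hc i
      simpa [CQA.toCRPQ, hc₁def] using this
    subst hcforce
    haveI := F₁.fin
    -- the map from the expansion of Q₂ into F₁
    let rawφ : Q₂.toCRPQ.rawVar c₂ → F₁.X := fun z =>
      Sum.elim (fun x => ρ₁ (Quotient.mk _ (Sum.inl (h x))))
        (fun p => Fin.elim0 p.2) z
    let φ : Q₂.toCRPQ.expVar c₂ → F₁.X :=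
      Quotient.lift rawφ (fun a b hab => by
        rw [Q₂.toCRPQ.eqvGen_eq_of_nonempty hc₂ne hab])
    let ρ₂ : Q₂.toCRPQ.expVar c₂ → {y : F₁.X // ∃ z, φ z = y} :=
      fun z => ⟨φ z, z, rfl⟩
    refine ⟨⟨{y : F₁.X // ∃ z, φ z = y}, Subtype.finite,
      fun u a v => ∃ u' v', ρ₂ u' = u ∧ ρ₂ v' = v ∧ (Q₂.toCRPQ.expansion c₂).Ed u' a v',
      fun j => ρ₂ ((Q₂.toCRPQ.expansion c₂).free j)⟩, ?_, ?_⟩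
    · refine ⟨c₂, fun i => by simp [CQA.toCRPQ, hc₂def], ρ₂, ?_, ?_, fun j => rfl, ?_⟩
      · rintro ⟨y, z, rfl⟩; exact ⟨z, rfl⟩
      · intro u a v; rfl
      · -- atom-injectivity of ρ₂
        rintro x y ⟨i, ⟨j, hj, rfl⟩, ⟨k, hk, rfl⟩⟩ hxy
        have hlen : (c₂ i).length = 1 := by simp [hc₂def]
        -- the only nodes are positions 0 and 1
        have hnode : ∀ (j : ℕ) (hj : j ≤ (c₂ i).length),
            Q₂.toCRPQ.nodeAt c₂ i j hj = Quotient.mk _ (Sum.inl (Q₂.src i)) ∨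
            Q₂.toCRPQ.nodeAt c₂ i j hj = Quotient.mk _ (Sum.inl (Q₂.tgt i)) := by
          intro j hj
          rw [hlen] at hj
          interval_cases j
          · exact Or.inl (Q₂.toCRPQ.nodeAt_zero c₂ i _)
          · right
            simp [CRPQ.nodeAt, CRPQ.rawNodeAt, hc₂def, CQA.toCRPQ]; rfl
        obtain ⟨k', hks, hkl, hkt⟩ := hhom.1 i
        have main : Q₂.src i ≠ Q₂.tgt i →
            ρ₁ (Quotient.mk _ (Sum.inl (h (Q₂.src i)))) ≠
              ρ₁ (Quotient.mk _ (Sum.inl (h (Q₂.tgt i)))) := by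
          intro hst
          have hlen1 : (c₁ k').length = 1 := by simp [hc₁def]
          apply hρinj
          · refine ⟨k', ⟨0, by omega, ?_⟩, ⟨1, by omega, ?_⟩⟩
            · simp [CRPQ.nodeAt, CRPQ.rawNodeAt, CQA.toCRPQ, hks]; rfl
            · simp [CRPQ.nodeAt, CRPQ.rawNodeAt, CQA.toCRPQ, hc₁def, hkt]; rfl
          · intro he
            exact hnc i hst
              (Sum.inl_injective (Q₁.toCRPQ.mk_injective_of_nonempty hc₁ne he))
        rcases hnode j hj with hx | hx <;> rcases hnode k hk with hy | hy <;>
            rw [hx, hy] at hxy ⊢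
        · exact absurd rfl hxy
        · exact fun he => main (fun hh => hxy (by rw [hh]))
            (congrArg Subtype.val he)
        · exact fun he => main (fun hh => hxy (by rw [hh]))
            (congrArg Subtype.val he).symm
        · exact absurd rfl hxy
    · refine ⟨Subtype.val, ⟨⟨?_, ?_⟩, Subtype.val_injective⟩⟩
      · rintro u a v ⟨u', v', rfl, rfl, i, jj, hlab, hu, hv⟩
        obtain ⟨jv, hjv⟩ := jj
        have hlen : (c₂ i).length = 1 := by simp [hc₂def]
        have hjv0 : jv = 0 := by omega
        subst hjv0
        have hu' : u' = Quotient.mk _ (Sum.inl (Q₂.src i)) := by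
          rw [hu]; simp [CRPQ.nodeAt, CRPQ.rawNodeAt, hc₂def, CQA.toCRPQ]; rfl
        have hv' : v' = Quotient.mk _ (Sum.inl (Q₂.tgt i)) := by
          rw [hv]; simp [CRPQ.nodeAt, CRPQ.rawNodeAt, hc₂def, CQA.toCRPQ]; rfl
        have ha : a = Q₂.lab i := by rw [← hlab]; simp [hc₂def]
        obtain ⟨k', hks, hkl, hkt⟩ := hhom.1 i
        rw [hρEd]
        refine ⟨Quotient.mk _ (Sum.inl (Q₁.src k')), Quotient.mk _ (Sum.inl (Q₁.tgt k')),
          ?_, ?_, ?_⟩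
        · show ρ₁ _ = (ρ₂ u').val
          rw [hu', hks]; rfl
        · show ρ₁ _ = (ρ₂ v').val
          rw [hv', hkt]; rfl
        · refine ⟨k', ⟨0, by simp [hc₁def]⟩, ?_, ?_, ?_⟩
          · simp [hc₁def, hkl, ha]
          · simp [CRPQ.nodeAt, CRPQ.rawNodeAt, CQA.toCRPQ, hc₁def]; rfl
          · simp [CRPQ.nodeAt, CRPQ.rawNodeAt, CQA.toCRPQ, hc₁def]; rfl
      · intro j
        show ρ₁ (Quotient.mk _ (Sum.inl (h (Q₂.free j)))) = F₁.free j
        rw [hhom.2 j, hρfree j]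
        rfl
  · -- containment
    intro G v hv
    obtain ⟨μ₁, hfree, hw⟩ := hv
    refine ⟨fun x => μ₁ (h x), ?_, ?_⟩
    · intro j
      show μ₁ (h (Q₂.free j)) = v j
      rw [hhom.2 j]; exact hfree j
    · intro i
      obtain ⟨k, hks, hkl, hkt⟩ := hhom.1 i
      obtain ⟨s, ⟨hchain, hend, hlab⟩, hcyc, hpath⟩ := hw k
      refine ⟨s, ⟨?_, ?_, ?_⟩, ?_, ?_⟩
      · show G.Chain (μ₁ (h (Q₂.src i))) s
        rw [← hks]; exact hchain
      · show G.endOf (μ₁ (h (Q₂.src i))) s = μ₁ (h (Q₂.tgt i))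
        rw [← hks, ← hkt]; exact hend
      · show G.label s ∈ ({[Q₂.lab i]} : Set (List A))
        rw [← hkl]; exact hlab
      · intro heq
        have hk : Q₁.src k = Q₁.tgt k := by
          rw [hks, hkt]
          show h (Q₂.src i) = h (Q₂.tgt i)
          exact congrArg h heq
        show G.IsSimpleCycle (μ₁ (h (Q₂.src i))) s
        rw [← hks]
        exact hcyc hk
      · intro hne
        have hk : Q₁.src k ≠ Q₁.tgt k := by
          rw [hks, hkt]
          exact hnc i hne
        show G.IsSimplePath (μ₁ (h (Q₂.src i))) s
        rw [← hks]
        exact hpath hk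
end
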